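/- Let A be a discrete random variable, Q, Y, Y' further discrete random variables, and X, X' discrete random variables with H(X | A, Q, Y) = 0, H(X' | A, Q, X, Y, Y') = 0, X independent of (Q, Y), and X' independent of (Q, X, Y, Y'). Then H(A) ≥ H(X) + H(X'). -/

import Mathlib

/-!
Writing each entropy as an expectation `H(Z) = -∑ ω, μ ω * log₂ p_Z(Z ω)`, Gibbs' inequality
(from `log x ≤ x - 1`) gives subadditivity and submodularity, and passing to a function of `Z`
can only lower the entropy. With `Z = (X, Q, Y)`:
`H(A) + H(Q, Y) ≥ H(A, Q, Y) = H(A, Z)` since `X` is recoverable from `(A, Q, Y)`;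
submodularity gives `H(A, Z) ≥ H(A, Z, Y') + H(Z) - H(Z, Y')`; since `X'` is recoverable,
`H(A, Z, Y') ≥ H(X', Q, X, Y, Y')`; finally the two independence hypotheses split
`H(Z) = H(X) + H(Q, Y)` and `H(X', Q, X, Y, Y') = H(X') + H(Q, X, Y, Y')`.
-/

open scoped BigOperators

/-- Probability that the discrete random variable `X` (on a finite probability
space with weights `μ`) takes the value `a`. -/
noncomputable def pr {Ω α : Type*} [Fintype Ω] (μ : Ω → ℝ) [DecidableEq α]
    (X : Ω → α) (a : α) : ℝ :=
  ∑ ω, if X ω = a then μ ω else 0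

/-- Shannon entropy (in bits) of the discrete random variable `X`. -/
noncomputable def entH {Ω α : Type*} [Fintype Ω] [Fintype α] [DecidableEq α]
    (μ : Ω → ℝ) (X : Ω → α) : ℝ :=
  -∑ a, pr μ X a * Real.logb 2 (pr μ X a)

/-- Conditional Shannon entropy `H(X | Y) = H(X, Y) - H(Y)`. -/
noncomputable def condH {Ω α β : Type*} [Fintype Ω] [Fintype α] [DecidableEq α]
    [Fintype β] [DecidableEq β] (μ : Ω → ℝ) (X : Ω → α) (Y : Ω → β) : ℝ :=
  entH μ (fun ω => (X ω, Y ω)) - entH μ Y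

/-- `X` and `Y` are independent random variables. -/
def IndepRV {Ω α β : Type*} [Fintype Ω] [DecidableEq α] [DecidableEq β]
    (μ : Ω → ℝ) (X : Ω → α) (Y : Ω → β) : Prop :=
  ∀ a b, pr μ (fun ω => (X ω, Y ω)) (a, b) = pr μ X a * pr μ Y b

/-- `μ` is a probability mass function on the finite sample space `Ω`. -/
def IsPMF {Ω : Type*} [Fintype Ω] (μ : Ω → ℝ) : Prop :=
  (∀ ω, 0 ≤ μ ω) ∧ ∑ ω, μ ω = 1

open Finset Real

section Probability

variable {Ω ι κ : Type*} [Fintype Ω] {μ : Ω → ℝ} [DecidableEq ι] [DecidableEq κ]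

theorem sum_pr_mul [Fintype ι] (Z : Ω → ι) (f : ι → ℝ) :
    ∑ z, pr μ Z z * f z = ∑ ω, μ ω * f (Z ω) := by
  simp only [pr, sum_mul, ite_mul, zero_mul]
  rw [sum_comm]
  simp

theorem sum_pr [Fintype ι] (Z : Ω → ι) : ∑ z, pr μ Z z = ∑ ω, μ ω := by
  simpa using sum_pr_mul (μ := μ) Z 1

theorem sum_pr_pair_left [Fintype ι] (U : Ω → ι) (V : Ω → κ) (b : κ) :
    ∑ a, pr μ (fun ω => (U ω, V ω)) (a, b) = pr μ V b := by
  simp only [pr, Prod.mk.injEq]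
  rw [sum_comm]
  refine sum_congr rfl fun ω _ => ?_
  by_cases hb : V ω = b <;> simp [hb]

theorem sum_pr_pair_right [Fintype κ] (U : Ω → ι) (V : Ω → κ) (a : ι) :
    ∑ b, pr μ (fun ω => (U ω, V ω)) (a, b) = pr μ U a := by
  simp only [pr, Prod.mk.injEq]
  rw [sum_comm]
  refine sum_congr rfl fun ω _ => ?_
  by_cases ha : U ω = a <;> simp [ha]

theorem pr_nonneg (h0 : ∀ ω, 0 ≤ μ ω) (Z : Ω → ι) (z : ι) : 0 ≤ pr μ Z z :=
  sum_nonneg fun ω _ => by split_ifs <;> simp [h0 ω]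

theorem pr_le_pr_comp (h0 : ∀ ω, 0 ≤ μ ω) (Z : Ω → ι) (f : ι → κ) (z : ι) :
    pr μ Z z ≤ pr μ (fun ω => f (Z ω)) (f z) :=
  sum_le_sum fun ω _ => by split_ifs <;> simp_all

theorem le_pr_apply (h0 : ∀ ω, 0 ≤ μ ω) (Z : Ω → ι) (ω : Ω) :
    μ ω ≤ pr μ Z (Z ω) := by
  simpa [pr] using single_le_sum (f := fun ω' => if Z ω' = Z ω then μ ω' else 0)
    (fun ω' _ => by split_ifs <;> simp [h0 ω']) (mem_univ ω)

theorem pr_apply_pos (h0 : ∀ ω, 0 ≤ μ ω) (Z : Ω → ι) {ω : Ω} (hω : μ ω ≠ 0) :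
    0 < pr μ Z (Z ω) :=
  (lt_of_le_of_ne (h0 ω) (Ne.symm hω)).trans_le (le_pr_apply h0 Z ω)

theorem sum_mul_congr_of_ne_zero {f g : Ω → ℝ} (h : ∀ ω, μ ω ≠ 0 → f ω = g ω) :
    ∑ ω, μ ω * f ω = ∑ ω, μ ω * g ω :=
  sum_congr rfl fun ω _ => by by_cases hω : μ ω = 0 <;> simp [hω, h]

end Probability

section Entropy

variable {Ω ι κ ν : Type*} [Fintype Ω] {μ : Ω → ℝ}
variable [Fintype ι] [DecidableEq ι] [Fintype κ] [DecidableEq κ] [Fintype ν] [DecidableEq ν]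

theorem entH_eq_sum (Z : Ω → ι) : entH μ Z = -∑ ω, μ ω * logb 2 (pr μ Z (Z ω)) := by
  rw [entH, sum_pr_mul Z (fun z => logb 2 (pr μ Z z))]

theorem entH_add_entH (h0 : ∀ ω, 0 ≤ μ ω) (U : Ω → ι) (V : Ω → κ) :
    entH μ U + entH μ V = -∑ ω, μ ω * logb 2 (pr μ U (U ω) * pr μ V (V ω)) := by
  rw [sum_mul_congr_of_ne_zero fun ω hω => logb_mul (pr_apply_pos h0 U hω).ne'
    (pr_apply_pos h0 V hω).ne']
  simp only [mul_add, sum_add_distrib, entH_eq_sum]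
  ring

theorem entH_comp_le (h0 : ∀ ω, 0 ≤ μ ω) (Z : Ω → ι) (f : ι → κ) :
    entH μ (fun ω => f (Z ω)) ≤ entH μ Z := by
  rw [entH_eq_sum, entH_eq_sum, neg_le_neg_iff]
  refine sum_le_sum fun ω _ => ?_
  by_cases hω : μ ω = 0
  · simp [hω]
  exact mul_le_mul_of_nonneg_left (logb_le_logb_of_le one_lt_two (pr_apply_pos h0 Z hω)
    (pr_le_pr_comp h0 Z f (Z ω))) (h0 ω)

theorem entH_le_neg_sum_mul_logb (h0 : ∀ ω, 0 ≤ μ ω) (Z : Ω → ι) (q : ι → ℝ)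
    (hq0 : ∀ z, 0 ≤ q z) (hq : ∑ z, q z ≤ ∑ ω, μ ω)
    (hpos : ∀ ω, μ ω ≠ 0 → 0 < q (Z ω)) :
    entH μ Z ≤ -∑ ω, μ ω * logb 2 (q (Z ω)) := by
  have hlog2 : 0 < log 2 := log_pos one_lt_two
  have pointwise : ∀ ω, μ ω * logb 2 (q (Z ω)) - μ ω * logb 2 (pr μ Z (Z ω))
      ≤ μ ω * (q (Z ω) / pr μ Z (Z ω) - 1) / log 2 := by
    intro ω
    by_cases hω : μ ω = 0
    · simp [hω]
    have hp := pr_apply_pos h0 Z hω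
    rw [← mul_sub, ← logb_div (hpos ω hω).ne' hp.ne', mul_div_assoc]
    exact mul_le_mul_of_nonneg_left (div_le_div_of_nonneg_right
      (log_le_sub_one_of_pos (div_pos (hpos ω hω) hp)) hlog2.le) (h0 ω)
  have hsum : ∑ z, pr μ Z z * (q z / pr μ Z z - 1) ≤ ∑ z, q z - ∑ z, pr μ Z z := by
    rw [← sum_sub_distrib]
    refine sum_le_sum fun z _ => ?_
    rcases eq_or_ne (pr μ Z z) 0 with h | h
    · simp [h, hq0 z]
    · rw [mul_sub, mul_div_cancel₀ _ h, mul_one]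
  have hgap :
      ∑ ω, μ ω * logb 2 (q (Z ω)) - ∑ ω, μ ω * logb 2 (pr μ Z (Z ω)) ≤ 0 := calc
    _ ≤ ∑ ω, μ ω * (q (Z ω) / pr μ Z (Z ω) - 1) / log 2 := by
      rw [← sum_sub_distrib]; exact sum_le_sum fun ω _ => pointwise ω
    _ = (∑ z, pr μ Z z * (q z / pr μ Z z - 1)) / log 2 := by rw [← sum_div, sum_pr_mul]
    _ ≤ 0 := div_nonpos_of_nonpos_of_nonneg (by rw [sum_pr] at hsum; linarith) hlog2.le
  rw [entH_eq_sum]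
  linarith

theorem entH_pair_of_indep (h0 : ∀ ω, 0 ≤ μ ω) (U : Ω → ι) (V : Ω → κ)
    (h : IndepRV μ U V) :
    entH μ (fun ω => (U ω, V ω)) = entH μ U + entH μ V := by
  unfold IndepRV at h
  simp only [entH_eq_sum (fun ω => (U ω, V ω)), h, entH_add_entH h0 U V]

theorem entH_pair_le (h0 : ∀ ω, 0 ≤ μ ω) (h1 : ∑ ω, μ ω = 1) (U : Ω → ι)
    (V : Ω → κ) :
    entH μ (fun ω => (U ω, V ω)) ≤ entH μ U + entH μ V := by
  rw [entH_add_entH h0]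
  refine entH_le_neg_sum_mul_logb h0 (fun ω => (U ω, V ω)) (fun z => pr μ U z.1 * pr μ V z.2)
    (fun z => mul_nonneg (pr_nonneg h0 U _) (pr_nonneg h0 V _)) ?_
    (fun ω hω => mul_pos (pr_apply_pos h0 U hω) (pr_apply_pos h0 V hω))
  rw [Fintype.sum_prod_type, ← sum_mul_sum, sum_pr, sum_pr, h1, one_mul]

theorem entH_submodular (h0 : ∀ ω, 0 ≤ μ ω) (U : Ω → ι) (V : Ω → κ) (W : Ω → ν) :
    entH μ (fun ω => (U ω, V ω, W ω)) + entH μ V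
      ≤ entH μ (fun ω => (U ω, V ω)) + entH μ (fun ω => (V ω, W ω)) := by
  have hq : ∑ z : ι × κ × ν, pr μ (fun ω => (U ω, V ω)) (z.1, z.2.1)
      * pr μ (fun ω => (V ω, W ω)) (z.2.1, z.2.2) / pr μ V z.2.1 = ∑ ω, μ ω := by
    simp only [Fintype.sum_prod_type]
    rw [sum_comm, ← sum_pr V]
    refine sum_congr rfl fun b _ => ?_
    calc ∑ a, ∑ c, pr μ (fun ω => (U ω, V ω)) (a, b) * pr μ (fun ω => (V ω, W ω)) (b, c)
          / pr μ V b
        = (∑ a, pr μ (fun ω => (U ω, V ω)) (a, b))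
          * (∑ c, pr μ (fun ω => (V ω, W ω)) (b, c))
          / pr μ V b := by
          rw [sum_mul_sum, sum_div]; simp_rw [sum_div]
      _ = pr μ V b := by rw [sum_pr_pair_left, sum_pr_pair_right, mul_self_div_self]
  have hpos : ∀ ω, μ ω ≠ 0 → 0 < pr μ (fun ω => (U ω, V ω)) (U ω, V ω)
      * pr μ (fun ω => (V ω, W ω)) (V ω, W ω) :=
    fun ω hω => mul_pos (pr_apply_pos h0 (fun ω => (U ω, V ω)) hω)
      (pr_apply_pos h0 (fun ω => (V ω, W ω)) hω)
  -- Compare with the distribution under which `U` and `W` are conditionally independent given `V`.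
  have gibbs := entH_le_neg_sum_mul_logb h0 (fun ω => (U ω, V ω, W ω))
    (fun z => pr μ (fun ω => (U ω, V ω)) (z.1, z.2.1)
      * pr μ (fun ω => (V ω, W ω)) (z.2.1, z.2.2) / pr μ V z.2.1)
    (fun z => div_nonneg (mul_nonneg (pr_nonneg h0 _ _) (pr_nonneg h0 _ _)) (pr_nonneg h0 _ _))
    hq.le (fun ω hω => div_pos (hpos ω hω) (pr_apply_pos h0 V hω))
  rw [sum_mul_congr_of_ne_zero fun ω hω => logb_div (hpos ω hω).ne' (pr_apply_pos h0 V hω).ne']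
    at gibbs
  simp only [mul_sub, sum_sub_distrib] at gibbs
  have hUV_VW := entH_add_entH h0 (fun ω => (U ω, V ω)) (fun ω => (V ω, W ω))
  beta_reduce at hUV_VW
  linarith [entH_eq_sum (μ := μ) V]

end Entropy

/-- if `H(X | A, Q, Y) = 0`, `H(X' | A, Q, X, Y, Y') = 0`,
`X` is independent of `(Q, Y)`, and `X'` is independent of `(Q, X, Y, Y')`,
then `H(A) ≥ H(X) + H(X')`. -/
theorem stmt19 {Ω α β β' γ δ δ' : Type*} [Fintype Ω]
    [Fintype α] [DecidableEq α] [Fintype β] [DecidableEq β]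
    [Fintype β'] [DecidableEq β'] [Fintype γ] [DecidableEq γ]
    [Fintype δ] [DecidableEq δ] [Fintype δ'] [DecidableEq δ']
    (μ : Ω → ℝ) (hμ : IsPMF μ)
    (A : Ω → γ) (Q : Ω → α) (Y : Ω → β) (Y' : Ω → β')
    (X : Ω → δ) (X' : Ω → δ')
    (hrec : condH μ X (fun ω => (A ω, Q ω, Y ω)) = 0)
    (hrec' : condH μ X' (fun ω => (A ω, Q ω, X ω, Y ω, Y' ω)) = 0)
    (hind : IndepRV μ X (fun ω => (Q ω, Y ω)))
    (hind' : IndepRV μ X' (fun ω => (Q ω, X ω, Y ω, Y' ω))) :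
    entH μ A ≥ entH μ X + entH μ X' := by
  obtain ⟨h0, h1⟩ := hμ
  have hAQY :
      entH μ (fun ω => (A ω, Q ω, Y ω)) ≤ entH μ A + entH μ (fun ω => (Q ω, Y ω)) :=
    entH_pair_le h0 h1 A (fun ω => (Q ω, Y ω))
  have hX : entH μ (fun ω => (X ω, A ω, Q ω, Y ω)) = entH μ (fun ω => (A ω, Q ω, Y ω)) :=
    sub_eq_zero.mp hrec
  have hAZ :
      entH μ (fun ω => (A ω, X ω, Q ω, Y ω)) ≤ entH μ (fun ω => (X ω, A ω, Q ω, Y ω)) :=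
    entH_comp_le h0 (fun ω => (X ω, A ω, Q ω, Y ω)) fun p => (p.2.1, p.1, p.2.2)
  have hsub := entH_submodular h0 A (fun ω => (X ω, Q ω, Y ω)) Y'
  have hZ := entH_pair_of_indep h0 X (fun ω => (Q ω, Y ω)) hind
  have hZY' : entH μ (fun ω => ((X ω, Q ω, Y ω), Y' ω))
      ≤ entH μ (fun ω => (Q ω, X ω, Y ω, Y' ω)) :=
    entH_comp_le h0 (fun ω => (Q ω, X ω, Y ω, Y' ω))
      fun p => ((p.2.1, p.1, p.2.2.1), p.2.2.2)
  have hAZY' : entH μ (fun ω => (A ω, Q ω, X ω, Y ω, Y' ω))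
      ≤ entH μ (fun ω => (A ω, (X ω, Q ω, Y ω), Y' ω)) :=
    entH_comp_le h0 (fun ω => (A ω, (X ω, Q ω, Y ω), Y' ω))
      fun p => (p.1, p.2.1.2.1, p.2.1.1, p.2.1.2.2, p.2.2)
  have hX' : entH μ (fun ω => (X' ω, A ω, Q ω, X ω, Y ω, Y' ω))
      = entH μ (fun ω => (A ω, Q ω, X ω, Y ω, Y' ω)) :=
    sub_eq_zero.mp hrec'
  have hX'Z : entH μ (fun ω => (X' ω, Q ω, X ω, Y ω, Y' ω))
      ≤ entH μ (fun ω => (X' ω, A ω, Q ω, X ω, Y ω, Y' ω)) :=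
    entH_comp_le h0 (fun ω => (X' ω, A ω, Q ω, X ω, Y ω, Y' ω)) fun p => (p.1, p.2.2)
  linarith [entH_pair_of_indep h0 X' (fun ω => (Q ω, X ω, Y ω, Y' ω)) hind']
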